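/- For λ > 0, vectors φ₁,…,φ_n ∈ ℝ^p, the leave-one-out resolvent perturbation of the trace against a PSD matrix R is bounded: |Tr(G R) − Tr(G^μ R)| ≤ ‖R‖_op · ‖G^μ φ_μ‖² / (1 + φ_μ^⊤ G^μ φ_μ) ≤ ‖R‖_op / λ, where G and G^μ are as in the leave-one-out identity. -/

import Mathlib

/-!
By Sherman–Morrison, `G = G^μ - v vᵀ / (1 + φ_μᵀ v)` with `v = G^μ φ_μ`, so the trace difference is
`-vᵀ R v / (1 + φ_μᵀ v)`, and `|vᵀ R v| ≤ ‖R‖ ‖v‖²`. For the second bound, `A = Σ_{ν≠μ} φ_ν φ_νᵀ + λI`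
maps `v` to `φ_μ`, hence `λ ‖v‖² ≤ vᵀ A v = φ_μᵀ v`.
-/

open Matrix

namespace Matrix

variable {n : Type*} [Fintype n] [DecidableEq n]

theorem abs_dotProduct_mulVec_le (R : Matrix n n ℝ) (v : n → ℝ) :
    |v ⬝ᵥ R *ᵥ v| ≤ ‖toEuclideanCLM (𝕜 := ℝ) R‖ * ∑ i, v i ^ 2 := by
  set x : EuclideanSpace ℝ n := WithLp.toLp 2 v
  have hx : ‖x‖ ^ 2 = ∑ i, v i ^ 2 := by simp [x, EuclideanSpace.norm_sq_eq]
  calc |v ⬝ᵥ R *ᵥ v| = |inner ℝ x (toEuclideanCLM (𝕜 := ℝ) R x)| := by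
        rw [inner_toEuclideanCLM]
    _ ≤ ‖x‖ * ‖toEuclideanCLM (𝕜 := ℝ) R x‖ := abs_real_inner_le_norm _ _
    _ ≤ ‖x‖ * (‖toEuclideanCLM (𝕜 := ℝ) R‖ * ‖x‖) := by
        gcongr; exact ContinuousLinearMap.le_opNorm _ _
    _ = ‖toEuclideanCLM (𝕜 := ℝ) R‖ * ∑ i, v i ^ 2 := by rw [← hx]; ring

theorem inv_add_vecMulVec {K : Type*} [Field K] {A : Matrix n n K} (hA : IsUnit A.det)
    (u w : n → K) (h : 1 + w ⬝ᵥ A⁻¹ *ᵥ u ≠ 0) :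
    (A + vecMulVec u w)⁻¹
      = A⁻¹ - (1 + w ⬝ᵥ A⁻¹ *ᵥ u)⁻¹ • vecMulVec (A⁻¹ *ᵥ u) (w ᵥ* A⁻¹) := by
  set c := w ⬝ᵥ A⁻¹ *ᵥ u
  have hAA : A * A⁻¹ = 1 := mul_nonsing_inv A hA
  have hu : A *ᵥ A⁻¹ *ᵥ u = u := by rw [mulVec_mulVec, hAA, one_mulVec]
  have hc : (1 + c)⁻¹ + (1 + c)⁻¹ * c = 1 := by field_simp
  refine inv_eq_right_inv ?_
  rw [add_mul, mul_sub, mul_sub, Matrix.mul_smul, Matrix.mul_smul, hAA, mul_vecMulVec, hu,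
    vecMulVec_mul, vecMulVec_mul_vecMulVec, vecMulVec_smul, smul_smul]
  calc 1 - (1 + c)⁻¹ • vecMulVec u (w ᵥ* A⁻¹)
        + (vecMulVec u (w ᵥ* A⁻¹) - ((1 + c)⁻¹ * c) • vecMulVec u (w ᵥ* A⁻¹))
      = 1 + (1 - ((1 + c)⁻¹ + (1 + c)⁻¹ * c)) • vecMulVec u (w ᵥ* A⁻¹) := by module
    _ = 1 := by rw [hc, sub_self, zero_smul, add_zero]

theorem trace_inv_add_vecMulVec_mul_sub {K : Type*} [Field K] {A : Matrix n n K}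
    (hA : IsUnit A.det) (u w : n → K) (h : 1 + w ⬝ᵥ A⁻¹ *ᵥ u ≠ 0) (R : Matrix n n K) :
    ((A + vecMulVec u w)⁻¹ * R).trace - (A⁻¹ * R).trace
      = -((w ᵥ* A⁻¹) ⬝ᵥ R *ᵥ A⁻¹ *ᵥ u) / (1 + w ⬝ᵥ A⁻¹ *ᵥ u) := by
  rw [inv_add_vecMulVec hA u w h, sub_mul, trace_sub, smul_mul, trace_smul, vecMulVec_mul,
    trace_vecMulVec, dotProduct_comm (A⁻¹ *ᵥ u), ← dotProduct_mulVec, smul_eq_mul]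
  ring

theorem mul_sum_sq_le_dotProduct_of_add_smul_one_mulVec_eq {M : Matrix n n ℝ}
    (hM : M.PosSemidef) {lam : ℝ} {u v : n → ℝ} (h : (M + lam • 1) *ᵥ v = u) :
    lam * ∑ i, v i ^ 2 ≤ v ⬝ᵥ u := by
  have hMv : 0 ≤ v ⬝ᵥ M *ᵥ v := by simpa using hM.dotProduct_mulVec_nonneg v
  have : v ⬝ᵥ u = v ⬝ᵥ M *ᵥ v + lam * ∑ i, v i ^ 2 := by
    rw [← h, add_mulVec, smul_mulVec, one_mulVec, dotProduct_add, dotProduct_smul, smul_eq_mul]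
    simp only [dotProduct, sq]
  linarith

end Matrix

theorem leave_one_out_trace_bound_general {n p : ℕ}
    (φ : Fin n → Fin p → ℝ) (lam : ℝ) (hlam : 0 < lam) (μ : Fin n)
    (R : Matrix (Fin p) (Fin p) ℝ)
    (G Gμ : Matrix (Fin p) (Fin p) ℝ)
    (hG : G = (∑ ν, vecMulVec (φ ν) (φ ν)
        + lam • (1 : Matrix (Fin p) (Fin p) ℝ))⁻¹)
    (hGμ : Gμ = (∑ ν ∈ Finset.univ.erase μ, vecMulVec (φ ν) (φ ν)
        + lam • (1 : Matrix (Fin p) (Fin p) ℝ))⁻¹) :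
    |(G * R).trace - (Gμ * R).trace|
      ≤ ‖Matrix.toEuclideanCLM (𝕜 := ℝ) R‖ * (∑ i, (Gμ *ᵥ φ μ) i ^ 2)
          / (1 + φ μ ⬝ᵥ (Gμ *ᵥ φ μ))
    ∧ ‖Matrix.toEuclideanCLM (𝕜 := ℝ) R‖ * (∑ i, (Gμ *ᵥ φ μ) i ^ 2)
          / (1 + φ μ ⬝ᵥ (Gμ *ᵥ φ μ))
      ≤ ‖Matrix.toEuclideanCLM (𝕜 := ℝ) R‖ / lam := by
  set M := ∑ ν ∈ Finset.univ.erase μ, vecMulVec (φ ν) (φ ν)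
  set A := M + lam • (1 : Matrix (Fin p) (Fin p) ℝ)
  subst hG hGμ
  set v := A⁻¹ *ᵥ φ μ
  have hM : M.PosSemidef :=
    posSemidef_sum _ fun ν _ => by simpa using posSemidef_vecMulVec_self_star (φ ν)
  have hA : A.PosDef := PosDef.posSemidef_add hM (PosDef.one.smul hlam)
  have hAdet : IsUnit A.det := hA.det_pos.ne'.isUnit
  have hAv : A *ᵥ v = φ μ := by rw [mulVec_mulVec, mul_nonsing_inv _ hAdet, one_mulVec]
  have hvA : φ μ ᵥ* A⁻¹ = v := by
    rw [← mulVec_transpose, transpose_nonsing_inv, ← conjTranspose_eq_transpose_of_trivial,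
      hA.isHermitian.eq]
  have hS : lam * ∑ i, v i ^ 2 ≤ φ μ ⬝ᵥ v := by
    rw [dotProduct_comm]
    exact mul_sum_sq_le_dotProduct_of_add_smul_one_mulVec_eq hM hAv
  have hc : 0 < 1 + φ μ ⬝ᵥ v := by nlinarith [show 0 ≤ ∑ i, v i ^ 2 by positivity]
  have hsplit : ∑ ν, vecMulVec (φ ν) (φ ν) + lam • 1 = A + vecMulVec (φ μ) (φ μ) := by
    rw [← Finset.add_sum_erase _ _ (Finset.mem_univ μ), add_assoc, add_comm]
  have htrace : ((A + vecMulVec (φ μ) (φ μ))⁻¹ * R).trace - (A⁻¹ * R).trace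
      = -(v ⬝ᵥ R *ᵥ v) / (1 + φ μ ⬝ᵥ v) := by
    rw [trace_inv_add_vecMulVec_mul_sub hAdet _ _ hc.ne', hvA]
  rw [hsplit, htrace, abs_div, abs_neg, abs_of_pos hc]
  refine ⟨by gcongr; exact abs_dotProduct_mulVec_le R v, ?_⟩
  rw [div_le_div_iff₀ hc hlam]
  nlinarith [norm_nonneg (toEuclideanCLM (𝕜 := ℝ) R)]

/-- Leave-one-out resolvent trace perturbation bound: for `λ > 0`, real features
`φ_ν ∈ ℝ^p` and a positive semidefinite matrix `R`, with
`G = (Σ_ν φ_ν φ_νᵀ + λI)⁻¹`, `G^μ = (Σ_{ν≠μ} φ_ν φ_νᵀ + λI)⁻¹`,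
`|Tr(GR) − Tr(G^μ R)| ≤ ‖R‖_op ‖G^μ φ_μ‖² / (1 + φ_μᵀ G^μ φ_μ) ≤ ‖R‖_op / λ`. -/
theorem leave_one_out_trace_bound {n p : ℕ}
    (φ : Fin n → Fin p → ℝ) (lam : ℝ) (hlam : 0 < lam) (μ : Fin n)
    (R : Matrix (Fin p) (Fin p) ℝ) (hR : R.PosSemidef)
    (G Gμ : Matrix (Fin p) (Fin p) ℝ)
    (hG : G = (∑ ν, vecMulVec (φ ν) (φ ν)
        + lam • (1 : Matrix (Fin p) (Fin p) ℝ))⁻¹)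
    (hGμ : Gμ = (∑ ν ∈ Finset.univ.erase μ, vecMulVec (φ ν) (φ ν)
        + lam • (1 : Matrix (Fin p) (Fin p) ℝ))⁻¹) :
    |(G * R).trace - (Gμ * R).trace|
      ≤ ‖Matrix.toEuclideanCLM (𝕜 := ℝ) R‖ * (∑ i, (Gμ *ᵥ φ μ) i ^ 2)
          / (1 + φ μ ⬝ᵥ (Gμ *ᵥ φ μ))
    ∧ ‖Matrix.toEuclideanCLM (𝕜 := ℝ) R‖ * (∑ i, (Gμ *ᵥ φ μ) i ^ 2)
          / (1 + φ μ ⬝ᵥ (Gμ *ᵥ φ μ))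
      ≤ ‖Matrix.toEuclideanCLM (𝕜 := ℝ) R‖ / lam :=
  leave_one_out_trace_bound_general φ lam hlam μ R G Gμ hG hGμ
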